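/- arXiv:1806.10366 — 2 statements merged into one kernel-verified Lean document; each statement's English description precedes it below -/
import Mathlib

section
/- Let H ∈ ℝ, h > 0, d ≥ 2 an integer, with 1 − t·H > 0 for all t ∈ [0, h]. Then ∫_0^h (1 − t H)^{d−1} dt ≤ h − ((d−1)/2)·H·h²·(1 − h H)^{d−2}. -/
/-!
The integrand `t ↦ (1 - tH)^{d-1}` is convex on `[0, h]`, so its integral is at most the
trapezoid value `h (1 + y^{d-1}) / 2`, where `y = 1 - hH > 0`. Comparing this with the right-hand
side reduces, after substituting `hH = 1 - y`, to `y^{d-1} + (d-1) y^{d-2} (1 - y) ≤ 1`: the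
tangent line of the convex function `x ↦ x^{d-1}` at `y` lies below its graph at `x = 1`.
-/

open Set intervalIntegral

theorem ConvexOn.intervalIntegral_le_trapezoid {f : ℝ → ℝ} {a b : ℝ} (hab : a ≤ b)
    (hf : ConvexOn ℝ (Icc a b) f) (hfi : IntervalIntegrable f MeasureTheory.volume a b) :
    ∫ x in a..b, f x ≤ (b - a) * (f a + f b) / 2 := by
  rcases hab.eq_or_lt with rfl | hlt
  · simp
  have hba : 0 < b - a := sub_pos.2 hlt
  have chord : ∀ x ∈ Icc a b, f x ≤ ((b - x) * f a + (x - a) * f b) / (b - a) := by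
    intro x hx
    have hcomb : ((b - x) / (b - a)) • a + ((x - a) / (b - a)) • b = x := by
      simp only [smul_eq_mul]; field_simp; ring
    have hconv := hf.2 (left_mem_Icc.2 hab) (right_mem_Icc.2 hab)
      (div_nonneg (sub_nonneg.2 hx.2) hba.le) (div_nonneg (sub_nonneg.2 hx.1) hba.le)
      (by field_simp; ring)
    rw [hcomb] at hconv
    exact hconv.trans_eq (by simp only [smul_eq_mul]; ring)
  calc ∫ x in a..b, f x ≤ ∫ x in a..b, ((b - x) * f a + (x - a) * f b) / (b - a) :=
        integral_mono_on hab hfi (Continuous.intervalIntegrable (by fun_prop) _ _) chord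
    _ = (b - a) * (f a + f b) / 2 := by
        rw [integral_div, integral_add (Continuous.intervalIntegrable (by fun_prop) _ _)
            (Continuous.intervalIntegrable (by fun_prop) _ _),
          integral_mul_const, integral_mul_const, integral_comp_sub_left (fun x => x),
          integral_comp_sub_right (fun x => x), integral_id, integral_id]
        field_simp
        ring

theorem convexOn_one_sub_mul_pow (H : ℝ) (k : ℕ) :
    ConvexOn ℝ {t | 0 ≤ 1 - t * H} (fun t => (1 - t * H) ^ k) := by
  have hline : ∀ t, AffineMap.lineMap (1 : ℝ) (1 - H) t = 1 - t * H := fun t => by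
    rw [AffineMap.lineMap_apply_ring']; ring
  simpa only [preimage, mem_Ici, Function.comp_def, hline] using
    (convexOn_pow k).comp_affineMap (AffineMap.lineMap (1 : ℝ) (1 - H))

theorem pow_succ_add_mul_pow_mul_one_sub_le_one {y : ℝ} (hy : 0 < y) (n : ℕ) :
    y ^ (n + 1) + (n + 1) * y ^ n * (1 - y) ≤ 1 := by
  have bernoulli := one_add_mul_le_pow (a := y⁻¹ - 1) (by linarith [inv_pos.2 hy]) (n + 1)
  rw [add_sub_cancel, inv_pow] at bernoulli
  calc y ^ (n + 1) + (n + 1) * y ^ n * (1 - y)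
      = y ^ (n + 1) * (1 + (n + 1 : ℕ) * (y⁻¹ - 1)) := by
        field_simp; push_cast; ring
    _ ≤ y ^ (n + 1) * (y ^ (n + 1))⁻¹ := by gcongr
    _ = 1 := mul_inv_cancel₀ (pow_pos hy _).ne'

/-- Let `H ∈ ℝ`, `h > 0`, `d ≥ 2` an integer, with `1 − t·H > 0` for all `t ∈ [0, h]`.
Then `∫_0^h (1 − tH)^{d−1} dt ≤ h − ((d−1)/2)·H·h²·(1 − hH)^{d−2}`. -/
theorem stmt6 (d : ℕ) (hd : 2 ≤ d) (H h : ℝ) (hh : 0 < h)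
    (hpos : ∀ t ∈ Set.Icc (0 : ℝ) h, 0 < 1 - t * H) :
    ∫ t in (0 : ℝ)..h, (1 - t * H) ^ (d - 1) ≤
      h - ((d : ℝ) - 1) / 2 * H * h ^ 2 * (1 - h * H) ^ (d - 2) := by
  obtain ⟨n, rfl⟩ : ∃ n, d = n + 2 := ⟨d - 2, by omega⟩
  have hy : 0 < 1 - h * H := hpos h (right_mem_Icc.2 hh.le)
  have hconv : ConvexOn ℝ (Icc 0 h) (fun t => (1 - t * H) ^ (n + 1)) :=
    (convexOn_one_sub_mul_pow H _).subset (fun t ht => (hpos t ht).le) (convex_Icc 0 h)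
  have htangent := pow_succ_add_mul_pow_mul_one_sub_le_one hy n
  calc ∫ t in (0 : ℝ)..h, (1 - t * H) ^ (n + 2 - 1)
      ≤ h * (1 + (1 - h * H) ^ (n + 1)) / 2 := by
        simpa using hconv.intervalIntegral_le_trapezoid hh.le
          (Continuous.intervalIntegrable (by fun_prop) _ _)
    _ ≤ h - (((n + 2 : ℕ) : ℝ) - 1) / 2 * H * h ^ 2 * (1 - h * H) ^ (n + 2 - 2) := by
        rw [Nat.add_sub_cancel]
        push_cast
        linarith [mul_nonneg hh.le (sub_nonneg.2 htangent)]
end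

section
/- Let d ≥ 2 and define the classical constant C_d = 4π²·ω_d^{−2/d} with ω_d the volume of the unit ball in ℝ^d. Then the ratio 2·(2C_d/(d+2))^{1/2} / [(1/(2(d+1)))·C_d^{(d+1)/2}/C_{d−1}^{(d−1)/2}] lies in the interval [3/√2, 4/√π], and converges to 4/√π as d → ∞. -/
/-!
Through `ω_d / ω_{d-1} = √π Γ((d+1)/2) / Γ((d+2)/2)` the quotient equals `√(8 f(d) / π)`, where
`f(x) = (x+1)² Γ((x+1)/2)² / ((x+2) Γ((x+2)/2)²)`. The functional equation of `Γ` gives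
`f(x) f(x+1) = 4(x+2)/(x+3)`, and log-convexity of `Γ` gives `f ≤ 2`; together they squeeze
`2(x+2)/(x+3) ≤ f(x) ≤ 2`, which yields the upper bound and the limit. Dividing two consecutive
instances of the product formula gives `f(x+2)/f(x) = (x+3)²/((x+2)(x+4)) ≥ 1`, so the lower bound
only has to be checked at `d = 2`, where it is an equality, and at `d = 3`.
-/

open Real Filter Topology

theorem Real.Gamma_add_half_sq_le {y : ℝ} (hy : 0 < y) :
    Gamma (y + 1 / 2) ^ 2 ≤ y * Gamma y ^ 2 := by
  have hG := Gamma_pos_of_pos hy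
  have hlogconv := Gamma_mul_add_mul_le_rpow_Gamma_mul_rpow_Gamma hy (by linarith : 0 < y + 1)
    one_half_pos one_half_pos (add_halves 1)
  rw [show 1 / 2 * y + 1 / 2 * (y + 1) = y + 1 / 2 by ring, ← sqrt_eq_rpow, ← sqrt_eq_rpow,
    ← sqrt_mul hG.le, Gamma_add_one hy.ne'] at hlogconv
  calc Gamma (y + 1 / 2) ^ 2 ≤ √(Gamma y * (y * Gamma y)) ^ 2 := by gcongr
    _ = y * Gamma y ^ 2 := by rw [sq_sqrt (by positivity)]; ring

noncomputable def gammaRatioSq (x : ℝ) : ℝ :=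
  (x + 1) ^ 2 * Gamma ((x + 1) / 2) ^ 2 / ((x + 2) * Gamma ((x + 2) / 2) ^ 2)

section gammaRatioSq

variable {x : ℝ}

theorem gammaRatioSq_pos (hx : -1 < x) : 0 < gammaRatioSq x := by
  have := Gamma_pos_of_pos (by linarith : 0 < (x + 1) / 2)
  have := Gamma_pos_of_pos (by linarith : 0 < (x + 2) / 2)
  have : 0 < x + 1 := by linarith
  have : 0 < x + 2 := by linarith
  unfold gammaRatioSq
  positivity

theorem gammaRatioSq_mul_gammaRatioSq_add_one (hx : -1 < x) :
    gammaRatioSq x * gammaRatioSq (x + 1) = 4 * (x + 2) / (x + 3) := by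
  have h1 := Gamma_pos_of_pos (by linarith : 0 < (x + 1) / 2)
  have h2 := Gamma_pos_of_pos (by linarith : 0 < (x + 2) / 2)
  have hrec : Gamma ((x + 1 + 2) / 2) = (x + 1) / 2 * Gamma ((x + 1) / 2) := by
    rw [show (x + 1 + 2) / 2 = (x + 1) / 2 + 1 by ring, Gamma_add_one (by linarith)]
  unfold gammaRatioSq
  rw [hrec, show x + 1 + 1 = x + 2 by ring, show x + 1 + 2 = x + 3 by ring]
  have : x + 1 ≠ 0 := by linarith
  have : x + 2 ≠ 0 := by linarith
  have : x + 3 ≠ 0 := by linarith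
  field_simp
  ring

theorem gammaRatioSq_le_two (hx : -1 < x) : gammaRatioSq x ≤ 2 := by
  have h1 := Gamma_pos_of_pos (by linarith : 0 < (x + 1) / 2)
  have h2 := Gamma_pos_of_pos (by linarith : 0 < (x + 2) / 2)
  have hW := Gamma_add_half_sq_le (by linarith : 0 < (x + 2) / 2)
  rw [show (x + 2) / 2 + 1 / 2 = (x + 1) / 2 + 1 by ring,
    Gamma_add_one (by linarith)] at hW
  have : 0 < x + 2 := by linarith
  unfold gammaRatioSq
  rw [div_le_iff₀ (by positivity)]
  nlinarith

theorem two_mul_div_le_gammaRatioSq (hx : -1 < x) :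
    2 * (x + 2) / (x + 3) ≤ gammaRatioSq x := by
  have hmul := gammaRatioSq_mul_gammaRatioSq_add_one hx
  have hpos := gammaRatioSq_pos hx
  have hle := gammaRatioSq_le_two (by linarith : -1 < x + 1)
  rw [div_le_iff₀ (by linarith)]
  rw [eq_div_iff (by linarith)] at hmul
  nlinarith [mul_le_mul_of_nonneg_left hle (by nlinarith : 0 ≤ gammaRatioSq x * (x + 3))]

theorem gammaRatioSq_le_gammaRatioSq_add_two (hx : -1 < x) :
    gammaRatioSq x ≤ gammaRatioSq (x + 2) := by
  have h0 := gammaRatioSq_mul_gammaRatioSq_add_one hx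
  have h1 : gammaRatioSq (x + 1) * gammaRatioSq (x + 2) = 4 * (x + 3) / (x + 4) := by
    have h := gammaRatioSq_mul_gammaRatioSq_add_one (by linarith : -1 < x + 1)
    rwa [show x + 1 + 1 = x + 2 by ring, show x + 1 + 2 = x + 3 by ring,
      show x + 1 + 3 = x + 4 by ring] at h
  refine le_of_mul_le_mul_left ?_ (gammaRatioSq_pos (by linarith : -1 < x + 1))
  rw [mul_comm, h0, h1, div_le_div_iff₀ (by linarith) (by linarith)]
  nlinarith

theorem tendsto_gammaRatioSq : Tendsto (fun n : ℕ ↦ gammaRatioSq n) atTop (𝓝 2) := by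
  have hlower : Tendsto (fun n : ℕ ↦ 2 * ((n : ℝ) + 2) / (n + 3)) atTop (𝓝 2) := by
    convert tendsto_add_mul_div_add_mul_atTop_nhds (4 : ℝ) 3 2 one_ne_zero using 2 <;> ring
  exact tendsto_of_tendsto_of_tendsto_of_le_of_le hlower tendsto_const_nhds
    (fun n ↦ two_mul_div_le_gammaRatioSq (neg_one_lt_zero.trans_le n.cast_nonneg))
    (fun n ↦ gammaRatioSq_le_two (neg_one_lt_zero.trans_le n.cast_nonneg))

theorem gammaRatioSq_two : gammaRatioSq 2 = 9 * π / 16 := by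
  have hΓ : Gamma (3 / 2) = √π / 2 := by
    rw [show (3 / 2 : ℝ) = 1 / 2 + 1 by norm_num, Gamma_add_one (by norm_num), Gamma_one_half_eq]
    ring
  norm_num [gammaRatioSq, hΓ, div_pow, sq_sqrt pi_pos.le]
  ring

theorem nine_pi_div_sixteen_le_gammaRatioSq (n : ℕ) :
    9 * π / 16 ≤ gammaRatioSq ((n : ℝ) + 2) := by
  induction n using Nat.twoStepInduction with
  | zero => simp [gammaRatioSq_two]
  | one =>
    have h := gammaRatioSq_mul_gammaRatioSq_add_one (by norm_num : (-1 : ℝ) < 2)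
    rw [gammaRatioSq_two] at h
    -- `f 3 = 16 / (5 f 2)`, and `(9π/16)² ≤ 16/5` because `π < 3.15`
    norm_num at h ⊢
    nlinarith [pi_pos, pi_lt_d2]
  | more n ih _ =>
    have := gammaRatioSq_le_gammaRatioSq_add_two
      (by linarith [n.cast_nonneg (α := ℝ)] : (-1 : ℝ) < n + 2)
    push_cast
    linarith

end gammaRatioSq

noncomputable def unitBallVolume (n : ℕ) : ℝ := π ^ ((n : ℝ) / 2) / Gamma (1 + (n : ℝ) / 2)

noncomputable def weylConst (n : ℕ) : ℝ := 4 * π ^ 2 * unitBallVolume n ^ (-(2 : ℝ) / (n : ℝ))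

noncomputable def secondTermRatio (d : ℕ) : ℝ :=
  2 * ((2 * weylConst d) / ((d : ℝ) + 2)) ^ ((1 : ℝ) / 2) /
    ((1 / (2 * ((d : ℝ) + 1))) * (weylConst d) ^ (((d : ℝ) + 1) / 2) /
      (weylConst (d - 1)) ^ (((d : ℝ) - 1) / 2))

theorem unitBallVolume_pos (n : ℕ) : 0 < unitBallVolume n :=
  div_pos (rpow_pos_of_pos pi_pos _) (Gamma_pos_of_pos (by positivity))

theorem unitBallVolume_succ_div (n : ℕ) :
    unitBallVolume (n + 1) / unitBallVolume n =
      √π * Gamma (((n : ℝ) + 2) / 2) / Gamma (((n : ℝ) + 3) / 2) := by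
  have h1 := Gamma_pos_of_pos (by positivity : 0 < 1 + (n : ℝ) / 2)
  have h2 := Gamma_pos_of_pos (by positivity : 0 < ((n : ℝ) + 3) / 2)
  have hπ := rpow_pos_of_pos pi_pos ((n : ℝ) / 2)
  rw [unitBallVolume, unitBallVolume, Nat.cast_add_one, add_div, rpow_add pi_pos, ← sqrt_eq_rpow,
    show 1 + ((n : ℝ) / 2 + 1 / 2) = ((n : ℝ) + 3) / 2 by ring,
    show 1 + (n : ℝ) / 2 = ((n : ℝ) + 2) / 2 by ring]
  field_simp

theorem weylConst_pos (n : ℕ) : 0 < weylConst n := by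
  have := unitBallVolume_pos n
  unfold weylConst
  positivity

theorem weylConst_rpow_half {n : ℕ} (hn : n ≠ 0) :
    weylConst n ^ ((n : ℝ) / 2) = (2 * π) ^ n / unitBallVolume n := by
  have hω := unitBallVolume_pos n
  have hn' : (n : ℝ) ≠ 0 := Nat.cast_ne_zero.2 hn
  rw [weylConst, show 4 * π ^ 2 = (2 * π) ^ (2 : ℝ) by norm_num; ring,
    mul_rpow (by positivity) (rpow_nonneg hω.le _), ← rpow_mul (by positivity),
    ← rpow_mul hω.le, show 2 * ((n : ℝ) / 2) = n by ring,
    show -2 / (n : ℝ) * (n / 2) = -1 by field_simp, rpow_neg_one, rpow_natCast, div_eq_mul_inv]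

theorem secondTermRatio_succ {n : ℕ} (hn : n ≠ 0) :
    secondTermRatio (n + 1) = 2 * √2 * ((n : ℝ) + 2) / (π * √((n : ℝ) + 3)) *
      (unitBallVolume (n + 1) / unitBallVolume n) := by
  have hC := weylConst_pos (n + 1)
  have hCn := weylConst_rpow_half hn
  have hCsucc := weylConst_rpow_half n.succ_ne_zero
  have hsplit : weylConst (n + 1) ^ (((n : ℝ) + 1 + 1) / 2) =
      √(weylConst (n + 1)) * weylConst (n + 1) ^ (((n + 1 : ℕ) : ℝ) / 2) := by
    rw [sqrt_eq_rpow, ← rpow_add hC]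
    push_cast
    ring_nf
  rw [secondTermRatio, Nat.add_sub_cancel, Nat.cast_add_one, add_sub_cancel_right, hsplit, hCsucc,
    hCn, ← sqrt_eq_rpow, sqrt_div' _ (by positivity), sqrt_mul zero_le_two,
    show (n : ℝ) + 1 + 2 = n + 3 by ring, show (n : ℝ) + 1 + 1 = n + 2 by ring, pow_succ]
  have := unitBallVolume_pos n
  have := unitBallVolume_pos (n + 1)
  have : 0 < √(weylConst (n + 1)) := sqrt_pos.2 hC
  have : 0 < √((n : ℝ) + 3) := sqrt_pos.2 (by positivity)
  have := pi_pos
  field_simp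

theorem secondTermRatio_eq_sqrt {d : ℕ} (hd : 2 ≤ d) :
    secondTermRatio d = √(8 * gammaRatioSq d / π) := by
  obtain ⟨n, rfl⟩ : ∃ n, d = n + 1 := ⟨d - 1, by omega⟩
  have h1 := Gamma_pos_of_pos (by positivity : 0 < ((n : ℝ) + 2) / 2)
  have h2 := Gamma_pos_of_pos (by positivity : 0 < ((n : ℝ) + 3) / 2)
  have hπ := sqrt_pos.2 pi_pos
  have h3 := sqrt_pos.2 (by positivity : (0 : ℝ) < n + 3)
  rw [secondTermRatio_succ (by omega), unitBallVolume_succ_div, eq_comm,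
    sqrt_eq_iff_mul_self_eq_of_pos (by positivity), gammaRatioSq, Nat.cast_add_one,
    show (n : ℝ) + 1 + 1 = n + 2 by ring, show (n : ℝ) + 1 + 2 = n + 3 by ring]
  field_simp
  rw [sq_sqrt pi_pos.le, sq_sqrt zero_le_two, sq_sqrt (by positivity)]
  ring

theorem sqrt_eight_mul_two_div_pi : √(8 * 2 / π) = 4 / √π := by
  rw [sqrt_eq_iff_mul_self_eq_of_pos (by positivity), div_mul_div_comm, mul_self_sqrt pi_pos.le]
  ring

theorem secondTermRatio_mem_Icc {d : ℕ} (hd : 2 ≤ d) :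
    secondTermRatio d ∈ Set.Icc (3 / √2) (4 / √π) := by
  have hlower : 9 * π / 16 ≤ gammaRatioSq d := by
    obtain ⟨n, rfl⟩ := Nat.exists_eq_add_of_le' hd
    simpa using nine_pi_div_sixteen_le_gammaRatioSq n
  have hthree : 3 / √2 = √(8 * (9 * π / 16) / π) := by
    rw [eq_comm, sqrt_eq_iff_mul_self_eq_of_pos (by positivity), div_mul_div_comm,
      mul_self_sqrt zero_le_two]
    field_simp
    norm_num
  rw [secondTermRatio_eq_sqrt hd, hthree, ← sqrt_eight_mul_two_div_pi]
  exact ⟨by gcongr, by gcongr; exact gammaRatioSq_le_two (neg_one_lt_zero.trans_le d.cast_nonneg)⟩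

theorem tendsto_secondTermRatio : Tendsto secondTermRatio atTop (𝓝 (4 / √π)) := by
  rw [← sqrt_eight_mul_two_div_pi]
  refine (((tendsto_gammaRatioSq.const_mul 8).div_const π).sqrt).congr' ?_
  filter_upwards [eventually_ge_atTop 2] with d hd
  exact (secondTermRatio_eq_sqrt hd).symm

/-- Let `d ≥ 2` and define the classical constant `C_d = 4π²·ω_d^{−2/d}` with `ω_d` the
volume of the unit ball in `ℝ^d`. Then the ratio
`2·(2C_d/(d+2))^{1/2} / [(1/(2(d+1)))·C_d^{(d+1)/2}/C_{d−1}^{(d−1)/2}]` lies in the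
interval `[3/√2, 4/√π]`, and converges to `4/√π` as `d → ∞`. -/
theorem stmt17 (ω C : ℕ → ℝ)
    (hω : ∀ n : ℕ, ω n = π ^ ((n : ℝ) / 2) / Real.Gamma (1 + (n : ℝ) / 2))
    (hC : ∀ n : ℕ, C n = 4 * π ^ 2 * (ω n) ^ (-(2 : ℝ) / (n : ℝ)))
    (Q : ℕ → ℝ)
    (hQ : ∀ d : ℕ, Q d =
      2 * ((2 * C d) / ((d : ℝ) + 2)) ^ ((1 : ℝ) / 2) /
        ((1 / (2 * ((d : ℝ) + 1))) * (C d) ^ (((d : ℝ) + 1) / 2) /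
          (C (d - 1)) ^ (((d : ℝ) - 1) / 2))) :
    (∀ d : ℕ, 2 ≤ d → Q d ∈ Set.Icc (3 / Real.sqrt 2) (4 / Real.sqrt π)) ∧
    Tendsto Q atTop (nhds (4 / Real.sqrt π)) := by
  obtain rfl : ω = unitBallVolume := funext hω
  obtain rfl : C = weylConst := funext hC
  obtain rfl : Q = secondTermRatio := funext hQ
  exact ⟨fun d hd ↦ secondTermRatio_mem_Icc hd, tendsto_secondTermRatio⟩
end
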